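/- arXiv:2106.14210 — 6 statements merged into one kernel-verified Lean document; each statement's English description precedes it below -/
import Mathlib

section
/- Let U be an m×ℓ real matrix with orthonormal columns (U^T U = I_ℓ). Then the function Σ ↦ -log det(U^T Σ^{-1} U) is concave on the cone of m×m real positive definite matrices. -/
/-!
`(Uᵀ S⁻¹ U)⁻¹` is the least element, in the Loewner order, of `{Wᵀ S W | Wᵀ U = 1}` (a Schur
complement argument); being a pointwise minimum of linear functions of `S`, it is concave in `S`.
On positive definite matrices `log det` is concave and monotone (both are seen after
simultaneously diagonalizing two such matrices), so `S ↦ log det (Uᵀ S⁻¹ U)⁻¹ = -log det (Uᵀ S⁻¹ U)`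
is concave.
-/

open Matrix

namespace Matrix

open scoped MatrixOrder

theorem convex_setOf_posDef {n : Type*} : Convex ℝ {A : Matrix n n ℝ | A.PosDef} := by
  intro A hA B hB a b ha hb hab
  rcases ha.eq_or_lt with rfl | ha
  · simpa [show b = 1 by linarith] using hB
  · exact (hA.smul ha).add_posSemidef (hB.posSemidef.smul hb)

variable {n : Type*} [Fintype n] [DecidableEq n]

theorem det_transpose_mul_mul {R : Type*} [CommRing R] (C X : Matrix n n R) :
    (Cᵀ * X * C).det = C.det ^ 2 * X.det := by
  rw [det_mul, det_mul, det_transpose]; ring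

theorem IsHermitian.exists_transpose_mul_mul_eq_diagonal {M : Matrix n n ℝ} (hM : M.IsHermitian) :
    ∃ V : Matrix n n ℝ, Vᵀ * V = 1 ∧ ∃ μ : n → ℝ, Vᵀ * M * V = diagonal μ :=
  ⟨hM.eigenvectorUnitary,
    by simpa [star_eq_conjTranspose, conjTranspose_eq_transpose_of_trivial]
      using UnitaryGroup.star_mul_self hM.eigenvectorUnitary,
    hM.eigenvalues,
    by simpa [star_eq_conjTranspose, conjTranspose_eq_transpose_of_trivial]
      using hM.conjStarAlgAut_star_eigenvectorUnitary⟩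

theorem PosDef.exists_transpose_mul_mul_eq_one_and_diagonal {A B : Matrix n n ℝ}
    (hA : A.PosDef) (hB : B.IsHermitian) :
    ∃ C : Matrix n n ℝ, IsUnit C ∧ Cᵀ * A * C = 1 ∧ ∃ μ : n → ℝ, Cᵀ * B * C = diagonal μ := by
  set R := CFC.sqrt A
  have hR : Rᵀ = R := by
    rw [← conjTranspose_eq_transpose_of_trivial]; exact (CFC.sqrt_nonneg A).posSemidef.1
  have hRR : R * R = A := CFC.sqrt_mul_sqrt_self A hA.posSemidef.nonneg
  have hRu : IsUnit R.det := (isUnit_iff_isUnit_det R).1 <|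
    (CFC.isUnit_sqrt_iff A hA.posSemidef.nonneg).2 hA.isUnit
  have hM : (R⁻¹ᵀ * B * R⁻¹).IsHermitian := by
    simpa [conjTranspose_eq_transpose_of_trivial] using isHermitian_conjTranspose_mul_mul R⁻¹ hB
  obtain ⟨V, hV, μ, hVM⟩ := hM.exists_transpose_mul_mul_eq_diagonal
  have hA1 : (R⁻¹ * V)ᵀ * A * (R⁻¹ * V) = 1 := by
    rw [transpose_mul, transpose_nonsing_inv, hR, ← hRR, ← hV]
    simp only [Matrix.mul_assoc, nonsing_inv_mul_cancel_left _ _ hRu]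
    rw [← Matrix.mul_assoc R, mul_nonsing_inv _ hRu, Matrix.one_mul]
  refine ⟨R⁻¹ * V, (isUnit_iff_isUnit_det _).2 <| isUnit_det_of_left_inverse
    (by rw [← hA1, Matrix.mul_assoc]), hA1, μ, ?_⟩
  rw [← hVM, transpose_mul]; simp only [Matrix.mul_assoc]

theorem PosDef.det_le_det {A B : Matrix n n ℝ} (hA : A.PosDef) (hAB : A ≤ B) :
    A.det ≤ B.det := by
  have hB : B.IsHermitian := by simpa using hA.1.add hAB.1
  obtain ⟨C, hC, hCA, μ, hCB⟩ := hA.exists_transpose_mul_mul_eq_one_and_diagonal hB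
  have hμ : ∀ i, 1 ≤ μ i := by
    have : (diagonal μ - 1).PosSemidef := by
      rw [← hCA, ← hCB, ← Matrix.sub_mul, ← Matrix.mul_sub,
        ← conjTranspose_eq_transpose_of_trivial]
      exact (IsUnit.posSemidef_star_left_conjugate_iff hC).2 hAB
    intro i
    simpa [← diagonal_one, diagonal_sub] using this.diag_nonneg (i := i)
  have hdA : C.det ^ 2 * A.det = 1 := by rw [← det_transpose_mul_mul, hCA, det_one]
  have hdB : 1 ≤ C.det ^ 2 * B.det := by
    rw [← det_transpose_mul_mul, hCB, det_diagonal]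
    exact Finset.one_le_prod fun i _ => hμ i
  have hd : 0 < C.det ^ 2 := by
    have : C.det ≠ 0 := ((isUnit_iff_isUnit_det C).1 hC).ne_zero
    positivity
  exact le_of_mul_le_mul_left (hdA ▸ hdB) hd

theorem concaveOn_log_det : ConcaveOn ℝ {A : Matrix n n ℝ | A.PosDef} fun A => Real.log A.det := by
  refine ⟨convex_setOf_posDef, fun A hA B hB a b ha hb hab => ?_⟩
  obtain ⟨C, hC, hCA, μ, hCB⟩ := hA.exists_transpose_mul_mul_eq_one_and_diagonal hB.1
  have hμ : ∀ i, 0 < μ i := by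
    rw [← posDef_diagonal_iff, ← hCB, ← conjTranspose_eq_transpose_of_trivial]
    exact (IsUnit.posDef_star_left_conjugate_iff hC).2 hB
  have hCX : Cᵀ * (a • A + b • B) * C = diagonal fun i => a + b * μ i := by
    rw [Matrix.mul_add, Matrix.add_mul, Matrix.mul_smul, Matrix.smul_mul, Matrix.mul_smul,
      Matrix.smul_mul, hCA, hCB]
    ext i j
    rcases eq_or_ne i j with rfl | h <;> simp [*]
  have hd : C.det ^ 2 ≠ 0 := pow_ne_zero 2 ((isUnit_iff_isUnit_det C).1 hC).ne_zero
  have hlog : ∀ X : Matrix n n ℝ, X.PosDef →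
      Real.log X.det = Real.log (Cᵀ * X * C).det - Real.log (C.det ^ 2) := fun X hX => by
    rw [det_transpose_mul_mul, Real.log_mul hd hX.det_pos.ne', add_sub_cancel_left]
  have hterm : ∀ i, b * Real.log (μ i) ≤ Real.log (a + b * μ i) := fun i => by
    simpa using strictConcaveOn_log_Ioi.concaveOn.2 (Set.mem_Ioi.2 one_pos)
      (Set.mem_Ioi.2 (hμ i)) ha hb hab
  have hpos : ∀ i, 0 < a + b * μ i := fun i => by
    simpa using convex_Ioi (0 : ℝ) one_pos (hμ i) ha hb hab
  simp only [smul_eq_mul]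
  rw [hlog A hA, hlog B hB, hlog _ (convex_setOf_posDef hA hB ha hb hab), hCA, hCB, hCX,
    det_one, det_diagonal, det_diagonal, Real.log_one,
    Real.log_prod fun i _ => (hμ i).ne', Real.log_prod fun i _ => (hpos i).ne']
  calc a * (0 - Real.log (C.det ^ 2)) + b * (∑ i, Real.log (μ i) - Real.log (C.det ^ 2))
      = ∑ i, b * Real.log (μ i) - Real.log (C.det ^ 2) := by
        rw [← Finset.mul_sum]; linear_combination -Real.log (C.det ^ 2) * hab
    _ ≤ ∑ i, Real.log (a + b * μ i) - Real.log (C.det ^ 2) := by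
      gcongr with i; exact hterm i

section Compression

variable {l : Type*} [Fintype l] {S : Matrix n n ℝ} {U : Matrix n l ℝ}

theorem PosDef.transpose_mul_inv_mul (hS : S.PosDef) (hU : Function.Injective U.mulVec) :
    (Uᵀ * S⁻¹ * U).PosDef := by
  simpa [conjTranspose_eq_transpose_of_trivial] using hS.inv.conjTranspose_mul_mul_same hU

variable [DecidableEq l]

theorem PosDef.mul_inv_transpose_mul_inv_mul_mul_transpose_le (hS : S.PosDef)
    (hK : (Uᵀ * S⁻¹ * U).PosDef) : U * (Uᵀ * S⁻¹ * U)⁻¹ * Uᵀ ≤ S := by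
  have := hS.isUnit.invertible
  have := hK.isUnit.invertible
  -- The Schur complement of `S` in this block matrix vanishes; that of `K := Uᵀ S⁻¹ U` is
  -- `S - U K⁻¹ Uᵀ`.
  have hblocks : (fromBlocks S U Uᴴ (Uᵀ * S⁻¹ * U)).PosSemidef :=
    (PosDef.fromBlocks₁₁ U _ hS).2 (by simpa [conjTranspose_eq_transpose_of_trivial] using .zero)
  exact Matrix.le_iff.2 <| by
    simpa [conjTranspose_eq_transpose_of_trivial] using (PosDef.fromBlocks₂₂ S U hK).1 hblocks

theorem PosDef.isLeast_inv_transpose_mul_inv_mul (hS : S.PosDef) (hK : (Uᵀ * S⁻¹ * U).PosDef) :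
    IsLeast {X | ∃ W : Matrix n l ℝ, Wᵀ * U = 1 ∧ Wᵀ * S * W = X} (Uᵀ * S⁻¹ * U)⁻¹ := by
  set K := Uᵀ * S⁻¹ * U
  have hSu : IsUnit S.det := (isUnit_iff_isUnit_det S).1 hS.isUnit
  have hKu : IsUnit K.det := (isUnit_iff_isUnit_det K).1 hK.isUnit
  have hSt : S⁻¹ᵀ = S⁻¹ := by
    rw [← conjTranspose_eq_transpose_of_trivial]; exact hS.inv.1
  have hKt : K⁻¹ᵀ = K⁻¹ := by
    rw [← conjTranspose_eq_transpose_of_trivial]; exact hK.inv.1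
  set W₀ := S⁻¹ * U * K⁻¹ with hW₀
  have hW₀U : W₀ᵀ * U = 1 := by
    rw [hW₀, transpose_mul, transpose_mul, hSt, hKt, Matrix.mul_assoc, nonsing_inv_mul _ hKu]
  have hSW₀ : S * W₀ = U * K⁻¹ := by
    rw [hW₀, Matrix.mul_assoc, mul_nonsing_inv_cancel_left _ _ hSu]
  refine ⟨⟨W₀, hW₀U, ?_⟩, ?_⟩
  · rw [Matrix.mul_assoc, hSW₀, ← Matrix.mul_assoc, hW₀U, Matrix.one_mul]
  · rintro _ ⟨W, hW, rfl⟩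
    have hW' : Uᵀ * W = 1 := by rw [← transpose_transpose W, ← transpose_mul, hW, transpose_one]
    have hsplit : Wᵀ * S * W - K⁻¹ = Wᵀ * (S - U * K⁻¹ * Uᵀ) * W := by
      rw [Matrix.mul_sub, Matrix.sub_mul,
        show Wᵀ * (U * K⁻¹ * Uᵀ) * W = Wᵀ * U * K⁻¹ * (Uᵀ * W) by simp only [Matrix.mul_assoc],
        hW, hW', Matrix.one_mul, Matrix.mul_one]
    rw [Matrix.le_iff, hsplit]
    have hschur := Matrix.le_iff.1 (hS.mul_inv_transpose_mul_inv_mul_mul_transpose_le hK)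
    simpa [conjTranspose_eq_transpose_of_trivial] using hschur.conjTranspose_mul_mul_same W

theorem concaveOn_inv_transpose_mul_inv_mul (hU : Function.Injective U.mulVec) :
    ConcaveOn ℝ {S : Matrix n n ℝ | S.PosDef} fun S => (Uᵀ * S⁻¹ * U)⁻¹ := by
  refine ⟨convex_setOf_posDef, fun S₁ h₁ S₂ h₂ a b ha hb hab => ?_⟩
  have hS := convex_setOf_posDef h₁ h₂ ha hb hab
  obtain ⟨W, hW, hWS⟩ :=
    (PosDef.isLeast_inv_transpose_mul_inv_mul hS (hS.transpose_mul_inv_mul hU)).1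
  have h₁W :=
    (PosDef.isLeast_inv_transpose_mul_inv_mul h₁ (h₁.transpose_mul_inv_mul hU)).2 ⟨W, hW, rfl⟩
  have h₂W :=
    (PosDef.isLeast_inv_transpose_mul_inv_mul h₂ (h₂.transpose_mul_inv_mul hU)).2 ⟨W, hW, rfl⟩
  calc a • (Uᵀ * S₁⁻¹ * U)⁻¹ + b • (Uᵀ * S₂⁻¹ * U)⁻¹
      ≤ a • (Wᵀ * S₁ * W) + b • (Wᵀ * S₂ * W) := by gcongr
    _ = Wᵀ * (a • S₁ + b • S₂) * W := by
      rw [Matrix.mul_add, Matrix.add_mul, Matrix.mul_smul, Matrix.smul_mul, Matrix.mul_smul,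
        Matrix.smul_mul]
    _ = (Uᵀ * (a • S₁ + b • S₂)⁻¹ * U)⁻¹ := hWS

theorem concaveOn_neg_log_det_transpose_mul_inv_mul (hU : Function.Injective U.mulVec) :
    ConcaveOn ℝ {S : Matrix n n ℝ | S.PosDef} fun S => -Real.log (Uᵀ * S⁻¹ * U).det := by
  refine ⟨convex_setOf_posDef, fun S₁ h₁ S₂ h₂ a b ha hb hab => ?_⟩
  have hlog : ∀ S : Matrix n n ℝ,
      -Real.log (Uᵀ * S⁻¹ * U).det = Real.log (Uᵀ * S⁻¹ * U)⁻¹.det := fun S => by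
    rw [det_nonsing_inv, Ring.inverse_eq_inv', Real.log_inv]
  have hK₁ := (h₁.transpose_mul_inv_mul hU).inv
  have hK₂ := (h₂.transpose_mul_inv_mul hU).inv
  have hcomb := convex_setOf_posDef hK₁ hK₂ ha hb hab
  simp only [hlog]
  calc a • Real.log (Uᵀ * S₁⁻¹ * U)⁻¹.det + b • Real.log (Uᵀ * S₂⁻¹ * U)⁻¹.det
      ≤ Real.log (a • (Uᵀ * S₁⁻¹ * U)⁻¹ + b • (Uᵀ * S₂⁻¹ * U)⁻¹).det :=
        concaveOn_log_det.2 hK₁ hK₂ ha hb hab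
    _ ≤ Real.log (Uᵀ * (a • S₁ + b • S₂)⁻¹ * U)⁻¹.det :=
        Real.log_le_log hcomb.det_pos <| PosDef.det_le_det hcomb <|
          (concaveOn_inv_transpose_mul_inv_mul hU).2 h₁ h₂ ha hb hab

end Compression

end Matrix

/-- For `U` with orthonormal columns (`Uᵀ U = I`), the function
`Sig ↦ -log det(Uᵀ Sig⁻¹ U)` is concave on positive definite matrices. -/
theorem neg_log_det_conj_inv_concave {m ℓ : ℕ}
    (U : Matrix (Fin m) (Fin ℓ) ℝ) (hU : Uᵀ * U = 1) :
    ∀ (S1 S2 : Matrix (Fin m) (Fin m) ℝ), S1.PosDef → S2.PosDef →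
      ∀ t : ℝ, 0 ≤ t → t ≤ 1 →
        -Real.log (Uᵀ * (t • S1 + (1 - t) • S2)⁻¹ * U).det ≥
          t * (-Real.log (Uᵀ * S1⁻¹ * U).det) +
          (1 - t) * (-Real.log (Uᵀ * S2⁻¹ * U).det) := by
  intro S1 S2 h1 h2 t ht0 ht1
  have hinj : Function.Injective U.mulVec :=
    Function.LeftInverse.injective (g := Uᵀ.mulVec) fun x => by rw [mulVec_mulVec, hU, one_mulVec]
  exact (concaveOn_neg_log_det_transpose_mul_inv_mul hinj).2 h1 h2 ht0 (sub_nonneg.2 ht1)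
    (add_sub_cancel t 1)
end

section
/- Let K ≻ 0 be an m×m real matrix and λ > 0. The function g(X) = -log det(X) + log det(I_m + X/m) + λ Tr(K^{-1} X), defined on positive definite X, has X_⋆ = (1/2)((m² I_m + (4m/λ)K)^{1/2} − m I_m) as a critical point: at X_⋆ one has X_⋆^{-1} = (X_⋆ + m I_m)^{-1} + λ K^{-1}. -/
/-!
With `X = (S - m I)/2` one has `X (X + m I) = (S² - m² I)/4 = (m/λ) K`. Since `X` and `X + m I`
commute, `X⁻¹ - (X + m I)⁻¹ = m (X (X + m I))⁻¹ = m ((m/λ) K)⁻¹ = λ K⁻¹`.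
-/

open Matrix

namespace Matrix

variable {n α : Type*} [Fintype n] [DecidableEq n] [CommRing α]

theorem inv_sub_inv_add_smul_one (X : Matrix n n α) (c : α)
    (h : IsUnit (X * (X + c • 1)).det) :
    X⁻¹ - (X + c • 1)⁻¹ = c • (X * (X + c • 1))⁻¹ := by
  set Y := X + c • 1
  rw [det_mul] at h
  have hX : IsUnit X.det := isUnit_of_mul_isUnit_left h
  have hY : IsUnit Y.det := isUnit_of_mul_isUnit_right h
  have hXY : X * Y = Y * X := by
    simp only [Y, Matrix.mul_add, Matrix.add_mul, Matrix.mul_smul, Matrix.smul_mul,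
      Matrix.mul_one, Matrix.one_mul]
  have hXinvY : X⁻¹ * Y = 1 + c • X⁻¹ := by
    rw [Matrix.mul_add, nonsing_inv_mul X hX, Matrix.mul_smul, Matrix.mul_one]
  calc X⁻¹ - Y⁻¹ = X⁻¹ * Y * Y⁻¹ - Y⁻¹ := by rw [mul_nonsing_inv_cancel_right Y X⁻¹ hY]
    _ = c • (X⁻¹ * Y⁻¹) := by
      rw [hXinvY, Matrix.add_mul, Matrix.one_mul, Matrix.smul_mul, add_sub_cancel_left]
    _ = c • (X * Y)⁻¹ := by rw [hXY, mul_inv_rev]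

theorem half_sub_mul_half_add {R : Type*} [Field R] [CharZero R] (S : Matrix n n R) (c : R) :
    (1 / 2 : R) • (S - c • 1) * ((1 / 2 : R) • (S - c • 1) + c • 1) =
      (1 / 4 : R) • (S * S - c ^ 2 • 1) := by
  simp only [Matrix.mul_add, Matrix.mul_sub, Matrix.sub_mul, Matrix.mul_smul, Matrix.smul_mul,
    Matrix.mul_one, Matrix.one_mul]
  module

end Matrix

theorem first_order_condition_closed_form_general {m : ℕ} (hm : 0 < m)
    (K S : Matrix (Fin m) (Fin m) ℝ) (hK : K.PosDef) (l : ℝ) (hl : 0 < l)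
    (hSsq : S * S = ((m : ℝ) ^ 2) • (1 : Matrix (Fin m) (Fin m) ℝ) + (4 * m / l) • K) :
    letI X : Matrix (Fin m) (Fin m) ℝ := (1 / 2 : ℝ) • (S - (m : ℝ) • 1)
    X⁻¹ = (X + (m : ℝ) • 1)⁻¹ + l • K⁻¹ := by
  set X : Matrix (Fin m) (Fin m) ℝ := (1 / 2 : ℝ) • (S - (m : ℝ) • 1)
  have hscalar : (m / l : ℝ) ≠ 0 := by positivity
  have hKdet : IsUnit K.det := hK.det_pos.ne'.isUnit
  have hprod : X * (X + (m : ℝ) • 1) = (m / l : ℝ) • K := by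
    rw [half_sub_mul_half_add, hSsq]
    module
  have hunit : IsUnit (X * (X + (m : ℝ) • 1)).det := by
    rw [hprod, det_smul]
    exact (hscalar.isUnit.pow _).mul hKdet
  have := invertibleOfNonzero hscalar
  rw [← sub_eq_iff_eq_add', inv_sub_inv_add_smul_one X _ hunit, hprod, inv_smul _ _ hKdet,
    invOf_eq_inv, smul_smul]
  field_simp

/-- The closed-form matrix `X⋆ = (1/2)((m² I + (4m/λ)K)^{1/2} − m I)` is a
critical point of `g(X) = -log det X + log det(I + X/m) + λ Tr(K⁻¹ X)`:
it satisfies the first-order condition `X⋆⁻¹ = (X⋆ + m I)⁻¹ + λ K⁻¹`. -/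
theorem first_order_condition_closed_form {m : ℕ} (hm : 0 < m)
    (K S : Matrix (Fin m) (Fin m) ℝ) (hK : K.PosDef) (l : ℝ) (hl : 0 < l)
    (hS : S.PosSemidef)
    (hSsq : S * S = ((m : ℝ) ^ 2) • (1 : Matrix (Fin m) (Fin m) ℝ) + (4 * m / l) • K) :
    letI X : Matrix (Fin m) (Fin m) ℝ := (1 / 2 : ℝ) • (S - (m : ℝ) • 1)
    X⁻¹ = (X + (m : ℝ) • 1)⁻¹ + l • K⁻¹ :=
  first_order_condition_closed_form_general hm K S hK l hl hSsq
end

section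
/- Let K ≻ 0, λ > 0, and suppose X_⋆ ≻ 0 satisfies the first-order condition X_⋆^{-1} = (X_⋆ + m I_m)^{-1} + λ K^{-1}. Then for every symmetric matrix H, Tr(H X_⋆^{-1} H X_⋆^{-1}) − Tr(H (X_⋆ + m I_m)^{-1} H (X_⋆ + m I_m)^{-1}) ≥ 0. -/
/-!
The first-order condition writes `X⁻¹ = (X + mI)⁻¹ + λK⁻¹` as a sum `B + D` of two positive
semidefinite matrices, and `B ↦ Tr(HBHB)` is monotone on the positive semidefinite cone:
`Tr(H(B+D)H(B+D)) - Tr(HBHB) = Tr((HDH)(B+D)) + Tr((HBH)D)`, and the trace of a product of two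
positive semidefinite matrices is nonnegative since `Tr(A C*C) = Tr(C A C*)`.
-/

open Matrix

namespace Matrix

open scoped ComplexOrder

variable {n 𝕜 : Type*} [Fintype n] [RCLike 𝕜]

theorem PosSemidef.trace_mul_nonneg {A B : Matrix n n 𝕜} (hA : A.PosSemidef)
    (hB : B.PosSemidef) : 0 ≤ (A * B).trace := by
  classical
  open scoped MatrixOrder in
  obtain ⟨C, rfl⟩ := CStarAlgebra.nonneg_iff_eq_star_mul_self.mp hB.nonneg
  rw [star_eq_conjTranspose, ← Matrix.mul_assoc, trace_mul_comm, ← Matrix.mul_assoc]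
  exact (hA.mul_mul_conjTranspose_same C).trace_nonneg

theorem IsHermitian.trace_mul_mul_mul_le_add {H B D : Matrix n n 𝕜} (hH : H.IsHermitian)
    (hB : B.PosSemidef) (hD : D.PosSemidef) :
    (H * B * H * B).trace ≤ (H * (B + D) * H * (B + D)).trace := by
  have conj_psd {P : Matrix n n 𝕜} (hP : P.PosSemidef) : (H * P * H).PosSemidef := by
    simpa only [hH.eq] using hP.conjTranspose_mul_mul_same H
  have hdiff : H * (B + D) * H * (B + D) - H * B * H * B
      = H * D * H * (B + D) + H * B * H * D := by
    noncomm_ring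
  rw [← sub_nonneg, ← trace_sub, hdiff, trace_add]
  exact add_nonneg ((conj_psd hD).trace_mul_nonneg (hB.add hD))
    ((conj_psd hB).trace_mul_nonneg hD)

end Matrix

/-- If `X⋆ ≻ 0` satisfies the first-order condition
`X⋆⁻¹ = (X⋆ + m I)⁻¹ + λ K⁻¹` with `K ≻ 0`, `λ > 0`, then for every symmetric
`H`, `Tr(H X⋆⁻¹ H X⋆⁻¹) − Tr(H (X⋆+mI)⁻¹ H (X⋆+mI)⁻¹) ≥ 0`. -/
theorem second_order_nonneg {m : ℕ}
    (K X : Matrix (Fin m) (Fin m) ℝ) (hK : K.PosDef) (l : ℝ) (hl : 0 < l)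
    (hX : X.PosDef)
    (hfoc : X⁻¹ = (X + (m : ℝ) • 1)⁻¹ + l • K⁻¹)
    (H : Matrix (Fin m) (Fin m) ℝ) (hH : H.IsSymm) :
    Matrix.trace (H * X⁻¹ * H * X⁻¹) -
      Matrix.trace (H * (X + (m : ℝ) • 1)⁻¹ * H * (X + (m : ℝ) • 1)⁻¹) ≥ 0 := by
  have hXm : (X + (m : ℝ) • 1).PosSemidef :=
    hX.posSemidef.add (PosSemidef.one.smul m.cast_nonneg)
  have hlK : (l • K⁻¹).PosSemidef := hK.inv.posSemidef.smul hl.le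
  rw [ge_iff_le, sub_nonneg, hfoc]
  exact (isHermitian_iff_isSymm.mpr hH).trace_mul_mul_mul_le_add hXm.inv hlK
end

section
/- Let A and B be n×n real symmetric positive semidefinite matrices, and suppose ‖A − B‖_op ≤ c for some c ≥ 0, where additionally 0 ⪯ M is an n×n positive semidefinite matrix. Then |log det(I + M^{1/2} A M^{1/2}) − log det(I + M^{1/2} B M^{1/2})| ≤ log det(I + c·M). -/
set_option maxHeartbeats 1000000

open Matrix Finset
open scoped MatrixOrder

variable {n : ℕ}

-- L1 : det (1 + E) ≥ 1 for PSD E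
lemma det_one_add_ge_one {E : Matrix (Fin n) (Fin n) ℝ} (hE : E.PosSemidef) :
    1 ≤ (1 + E).det := by
  have hH := hE.isHermitian
  have hU : (hH.eigenvectorUnitary : Matrix (Fin n) (Fin n) ℝ) *
      star (hH.eigenvectorUnitary : Matrix (Fin n) (Fin n) ℝ) = 1 :=
    Matrix.mem_unitaryGroup_iff.mp hH.eigenvectorUnitary.2
  have hU' : star (hH.eigenvectorUnitary : Matrix (Fin n) (Fin n) ℝ) *
      (hH.eigenvectorUnitary : Matrix (Fin n) (Fin n) ℝ) = 1 :=
    Matrix.mem_unitaryGroup_iff'.mp hH.eigenvectorUnitary.2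
  have hdecomp : 1 + E = (hH.eigenvectorUnitary : Matrix (Fin n) (Fin n) ℝ) *
      (1 + diagonal (RCLike.ofReal ∘ hH.eigenvalues)) *
      star (hH.eigenvectorUnitary : Matrix (Fin n) (Fin n) ℝ) := by
    rw [Matrix.mul_add, Matrix.add_mul, Matrix.mul_one, hU, ← Unitary.conjStarAlgAut_apply (S := ℝ), ← hH.spectral_theorem]
  rw [hdecomp, det_mul, det_mul, mul_comm, ← mul_assoc, ← det_mul, hU', det_one, one_mul]
  have : (1 : Matrix (Fin n) (Fin n) ℝ) + diagonal (RCLike.ofReal ∘ hH.eigenvalues)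
      = diagonal (fun i => 1 + hH.eigenvalues i) := by
    rw [← diagonal_one, diagonal_add]
    rfl
  rw [this, det_diagonal]
  calc (1:ℝ) = ∏ _i : Fin n, (1:ℝ) := by simp
    _ ≤ ∏ i : Fin n, (1 + hH.eigenvalues i) := by
        refine Finset.prod_le_prod (fun i _ => zero_le_one) (fun i _ => ?_)
        linarith [hE.eigenvalues_nonneg i]

-- L2 : X PD, D PSD => det X ≤ det (X + D)
lemma det_le_det_add {X D : Matrix (Fin n) (Fin n) ℝ} (hX : X.PosDef)
    (hD : D.PosSemidef) : X.det ≤ (X + D).det := by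
  set S := CFC.sqrt X with hS
  have hSsd : S.PosSemidef := (CFC.sqrt_nonneg X).posSemidef
  have hSS : S * S = X := CFC.sqrt_mul_sqrt_self X hX.posSemidef.nonneg
  have hdet : S.det * S.det = X.det := by rw [← det_mul, hSS]
  have hSdet : S.det ≠ 0 := by
    intro h; rw [h, mul_zero] at hdet; exact hX.det_pos.ne hdet
  have hSinv : S * S⁻¹ = 1 := mul_nonsing_inv S (by simpa using hSdet)
  have hSinv' : S⁻¹ * S = 1 := nonsing_inv_mul S (by simpa using hSdet)
  have hSinvH : S⁻¹ᴴ = S⁻¹ := hSsd.isHermitian.inv.eq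
  have hC : (S⁻¹ * D * S⁻¹).PosSemidef := by
    have := hD.mul_mul_conjTranspose_same S⁻¹
    rwa [hSinvH] at this
  have key : X + D = S * (1 + S⁻¹ * D * S⁻¹) * S := by
    rw [Matrix.mul_add, Matrix.add_mul, Matrix.mul_one, hSS]
    congr 1
    calc D = (S * S⁻¹) * D * (S⁻¹ * S) := by
          rw [hSinv, hSinv', Matrix.one_mul, Matrix.mul_one]
      _ = S * (S⁻¹ * D * S⁻¹) * S := by simp only [Matrix.mul_assoc]
  calc X.det = S.det * 1 * S.det := by rw [mul_one, hdet]
    _ ≤ S.det * (1 + S⁻¹ * D * S⁻¹).det * S.det := by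
        have h1 := det_one_add_ge_one hC
        have hpos : 0 < S.det * S.det := hdet ▸ hX.det_pos
        nlinarith [sq_nonneg S.det]
    _ = (X + D).det := by rw [key, det_mul, det_mul]

-- L3 : det (1 + P + R) ≤ det (1 + P) * det (1 + R)
lemma det_one_add_add_le {P R : Matrix (Fin n) (Fin n) ℝ} (hP : P.PosSemidef)
    (hR : R.PosSemidef) : (1 + P + R).det ≤ (1 + P).det * (1 + R).det := by
  have hX : (1 + P).PosDef := Matrix.PosDef.one.add_posSemidef hP
  set X := 1 + P with hXdef
  set S := CFC.sqrt X with hSdef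
  have hSsd : S.PosSemidef := (CFC.sqrt_nonneg X).posSemidef
  have hSS : S * S = X := CFC.sqrt_mul_sqrt_self X hX.posSemidef.nonneg
  have hdet : S.det * S.det = X.det := by rw [← det_mul, hSS]
  have hSdet : S.det ≠ 0 := by
    intro h; rw [h, mul_zero] at hdet; exact hX.det_pos.ne hdet
  have hSunit : IsUnit S.det := by simpa using (Ne.isUnit hSdet)
  have hSinv : S * S⁻¹ = 1 := mul_nonsing_inv S hSunit
  have hSinv' : S⁻¹ * S = 1 := nonsing_inv_mul S hSunit
  have hSinvH : S⁻¹ᴴ = S⁻¹ := hSsd.isHermitian.inv.eq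
  -- X⁻¹ = S⁻¹ * S⁻¹
  have hXinv : X⁻¹ = S⁻¹ * S⁻¹ := by
    rw [← hSS, Matrix.mul_inv_rev]
  -- 1 - X⁻¹ is PSD : 1 - X⁻¹ = S⁻¹ * P * S⁻¹
  have hone_sub : (1 : Matrix (Fin n) (Fin n) ℝ) - X⁻¹ = S⁻¹ * P * S⁻¹ := by
    have : P = X - 1 := by rw [hXdef]; abel
    rw [this, Matrix.mul_sub, Matrix.sub_mul, Matrix.mul_one, ← hXinv]
    rw [← hSS, ← Matrix.mul_assoc, hSinv', Matrix.one_mul, hSinv]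
  have hone_sub_psd : ((1 : Matrix (Fin n) (Fin n) ℝ) - X⁻¹).PosSemidef := by
    rw [hone_sub]
    have := hP.mul_mul_conjTranspose_same S⁻¹
    rwa [hSinvH] at this
  -- decompose
  set T := CFC.sqrt R with hTdef
  have hTsd : T.PosSemidef := (CFC.sqrt_nonneg R).posSemidef
  have hTT : T * T = R := CFC.sqrt_mul_sqrt_self R hR.nonneg
  have hkey : X + R = S * (1 + (S⁻¹ * T) * (T * S⁻¹)) * S := by
    rw [Matrix.mul_add, Matrix.add_mul, Matrix.mul_one, hSS]
    congr 1
    calc R = (S * S⁻¹) * (T * T) * (S⁻¹ * S) := by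
          rw [hSinv, hSinv', Matrix.one_mul, Matrix.mul_one, hTT]
      _ = S * (S⁻¹ * T * (T * S⁻¹)) * S := by simp only [Matrix.mul_assoc]
  have hcomm : (1 + (S⁻¹ * T) * (T * S⁻¹)).det = (1 + T * X⁻¹ * T).det := by
    have h : (T * S⁻¹) * (S⁻¹ * T) = T * X⁻¹ * T := by
      rw [hXinv]; simp only [Matrix.mul_assoc]
    rw [det_one_add_mul_comm, h]
  have hTXT : (T * X⁻¹ * T).PosSemidef := by
    have hXinvpsd : (X⁻¹).PosSemidef := by
      have : X⁻¹ = S⁻¹ * 1 * S⁻¹ᴴ := by rw [Matrix.mul_one, hSinvH, hXinv]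
      rw [this]
      exact Matrix.PosSemidef.one.mul_mul_conjTranspose_same S⁻¹
    have := hXinvpsd.mul_mul_conjTranspose_same T
    rwa [hTsd.isHermitian.eq] at this
  have hstep : (1 + T * X⁻¹ * T).det ≤ (1 + R).det := by
    have hPD : (1 + T * X⁻¹ * T).PosDef := Matrix.PosDef.one.add_posSemidef hTXT
    have hDiff : (R - T * X⁻¹ * T).PosSemidef := by
      have heq : R - T * X⁻¹ * T = T * (1 - X⁻¹) * T := by
        rw [Matrix.mul_sub, Matrix.sub_mul, Matrix.mul_one, hTT]
      rw [heq]
      have := hone_sub_psd.mul_mul_conjTranspose_same T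
      rwa [hTsd.isHermitian.eq] at this
    have := det_le_det_add hPD hDiff
    have heq2 : 1 + T * X⁻¹ * T + (R - T * X⁻¹ * T) = 1 + R := by abel
    rwa [heq2] at this
  calc (X + R).det = S.det * (1 + (S⁻¹ * T) * (T * S⁻¹)).det * S.det := by
        rw [hkey, det_mul, det_mul]
    _ = X.det * (1 + T * X⁻¹ * T).det := by
        rw [hcomm]; rw [← hdet]; ring
    _ ≤ X.det * (1 + R).det := by
        exact mul_le_mul_of_nonneg_left hstep hX.det_pos.le

/-- If `A, B, M ⪰ 0` with `−c I ⪯ A − B ⪯ c I` (i.e. `‖A−B‖_op ≤ c`), and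
`Msq` is the positive semidefinite square root of `M`, then
`|log det(I + Msq A Msq) − log det(I + Msq B Msq)| ≤ log det(I + c M)`. -/
theorem log_det_perturbation_bound {n : ℕ}
    (A B M Msq : Matrix (Fin n) (Fin n) ℝ)
    (hA : A.PosSemidef) (hB : B.PosSemidef) (hM : M.PosSemidef)
    (hMsq : Msq.PosSemidef) (hMsqsq : Msq * Msq = M)
    (c : ℝ) (hc : 0 ≤ c)
    (h1 : (c • (1 : Matrix (Fin n) (Fin n) ℝ) - (A - B)).PosSemidef)
    (h2 : (c • (1 : Matrix (Fin n) (Fin n) ℝ) - (B - A)).PosSemidef) :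
    |Real.log (1 + Msq * A * Msq).det - Real.log (1 + Msq * B * Msq).det| ≤
      Real.log (1 + c • M).det := by
  have hMsqH := hMsq.isHermitian.eq
  have hP : (Msq * A * Msq).PosSemidef := by
    have := hA.mul_mul_conjTranspose_same Msq; rwa [hMsqH] at this
  have hQ : (Msq * B * Msq).PosSemidef := by
    have := hB.mul_mul_conjTranspose_same Msq; rwa [hMsqH] at this
  have hR : (c • M).PosSemidef := by
    have hMt : Mᵀ = M := by simpa using hM.isHermitian.eq
    refine ⟨by simp [Matrix.IsHermitian, conjTranspose_smul, hMt], fun x => ?_⟩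
    have := hM.2 x
    simpa [smul_mulVec, dotProduct_smul, Finsupp.mul_sum, mul_assoc, mul_left_comm] using mul_nonneg hc this
  -- key inequality in both directions
  have key : ∀ P Q : Matrix (Fin n) (Fin n) ℝ, P.PosSemidef → Q.PosSemidef →
      (Q + c • M - P).PosSemidef → (1 + P).det ≤ (1 + Q).det * (1 + c • M).det := by
    intro P Q hPp hQp hDp
    have step1 : (1 + P).det ≤ (1 + Q + c • M).det := by
      have := det_le_det_add (Matrix.PosDef.one.add_posSemidef hPp) hDp
      have heq : 1 + P + (Q + c • M - P) = 1 + Q + c • M := by abel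
      rwa [heq] at this
    exact step1.trans (det_one_add_add_le hQp hR)
  have hdiff1 : (Msq * B * Msq + c • M - Msq * A * Msq).PosSemidef := by
    have := h1.mul_mul_conjTranspose_same Msq
    rw [hMsqH] at this
    have heq : Msq * (c • 1 - (A - B)) * Msq = Msq * B * Msq + c • M - Msq * A * Msq := by
      rw [← hMsqsq]
      simp only [Matrix.mul_sub, Matrix.sub_mul, Matrix.smul_mul, Matrix.mul_smul,
        Matrix.mul_one, mul_smul_comm, smul_mul_assoc]
      abel
    rwa [heq] at this
  have hdiff2 : (Msq * A * Msq + c • M - Msq * B * Msq).PosSemidef := by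
    have := h2.mul_mul_conjTranspose_same Msq
    rw [hMsqH] at this
    have heq : Msq * (c • 1 - (B - A)) * Msq = Msq * A * Msq + c • M - Msq * B * Msq := by
      rw [← hMsqsq]
      simp only [Matrix.mul_sub, Matrix.sub_mul, Matrix.smul_mul, Matrix.mul_smul,
        Matrix.mul_one, mul_smul_comm, smul_mul_assoc]
      abel
    rwa [heq] at this
  have hPdet : 0 < (1 + Msq * A * Msq).det := (Matrix.PosDef.one.add_posSemidef hP).det_pos
  have hQdet : 0 < (1 + Msq * B * Msq).det := (Matrix.PosDef.one.add_posSemidef hQ).det_pos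
  have hRdet : 0 < (1 + c • M).det := (Matrix.PosDef.one.add_posSemidef hR).det_pos
  rw [abs_sub_le_iff]
  constructor
  · rw [sub_le_iff_le_add, ← Real.log_mul hRdet.ne' hQdet.ne']
    apply Real.log_le_log hPdet
    rw [mul_comm]
    exact key _ _ hP hQ hdiff1
  · rw [sub_le_iff_le_add, ← Real.log_mul hRdet.ne' hPdet.ne']
    apply Real.log_le_log hQdet
    rw [mul_comm]
    exact key _ _ hQ hP hdiff2
end

section
/- Let X and Y be m×m real symmetric positive semidefinite matrices. If there exists t ∈ [0,1) such that -t(X + γ I) ⪯ X − Y ⪯ t(X + γ I) for some γ > 0, then (1/(1+t))·(X + γI)^{-1} ⪯ (Y + γI)^{-1} ⪯ (1/(1−t))·(X + γI)^{-1}. -/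
/-! Inversion is operator antitone on positive definite matrices: if `A ⪯ B` then the block
matrix `[[B, I], [I, A⁻¹]]` is positive semidefinite, since its Schur complement with respect to
`A⁻¹` is `B - A`, and then its other Schur complement `A⁻¹ - B⁻¹` is positive semidefinite too.
The hypotheses say `(1 - t)(X + γI) ⪯ Y + γI ⪯ (1 + t)(X + γI)`, so inverting reverses both
inequalities. -/

open Matrix

theorem Matrix.PosDef.posSemidef_inv_sub_inv {n K : Type*} [Fintype n] [DecidableEq n]
    [Field K] [PartialOrder K] [StarRing K] [StarOrderedRing K]
    {A B : Matrix n n K} (hA : A.PosDef) (hB : B.PosDef) (hAB : (B - A).PosSemidef) :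
    (A⁻¹ - B⁻¹).PosSemidef := by
  have := hA.isUnit.invertible
  have := hB.isUnit.invertible
  have := hA.inv.isUnit.invertible
  have h₂₂ := PosDef.fromBlocks₂₂ B 1 hA.inv
  have h₁₁ := PosDef.fromBlocks₁₁ 1 A⁻¹ hB
  simp only [conjTranspose_one, one_mul, mul_one, inv_inv_of_invertible] at h₂₂ h₁₁
  exact h₁₁.mp (h₂₂.mpr hAB)

theorem Matrix.inv_smul₀ {n K : Type*} [Fintype n] [DecidableEq n] [Field K]
    (k : K) (A : Matrix n n K) : (k • A)⁻¹ = k⁻¹ • A⁻¹ := by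
  rcases eq_or_ne k 0 with rfl | hk
  · simp
  by_cases hA : IsUnit A.det
  · exact inv_smul' (A := A) (Units.mk0 k hk) hA
  · have hkA : ¬IsUnit (k • A).det := by
      rwa [det_smul, IsUnit.mul_iff, not_and_or, or_iff_right (by simp [hk])]
    rw [nonsing_inv_apply_not_isUnit _ hA, nonsing_inv_apply_not_isUnit _ hkA, smul_zero]

/-- If `X, Y ⪰ 0` and `−t(X+γI) ⪯ X − Y ⪯ t(X+γI)` with `t ∈ [0,1)` and `γ > 0`,
then `(1/(1+t))(X+γI)⁻¹ ⪯ (Y+γI)⁻¹ ⪯ (1/(1−t))(X+γI)⁻¹`. -/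
theorem inverse_sandwich {m : ℕ}
    (X Y : Matrix (Fin m) (Fin m) ℝ) (hX : X.PosSemidef) (hY : Y.PosSemidef)
    (γ t : ℝ) (hγ : 0 < γ) (ht0 : 0 ≤ t) (ht1 : t < 1)
    (hub : (t • (X + γ • 1) - (X - Y)).PosSemidef)
    (hlb : (t • (X + γ • 1) + (X - Y)).PosSemidef) :
    ((Y + γ • 1)⁻¹ - (1 / (1 + t)) • (X + γ • 1)⁻¹).PosSemidef ∧
      ((1 / (1 - t)) • (X + γ • 1)⁻¹ - (Y + γ • 1)⁻¹).PosSemidef := by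
  have hA : (X + γ • 1).PosDef := PosDef.posSemidef_add hX (PosDef.one.smul hγ)
  have hB : (Y + γ • 1).PosDef := PosDef.posSemidef_add hY (PosDef.one.smul hγ)
  rw [one_div, one_div, ← inv_smul₀, ← inv_smul₀]
  constructor
  · refine hB.posSemidef_inv_sub_inv (hA.smul (by linarith)) ?_
    rwa [show (1 + t) • (X + γ • 1) - (Y + γ • 1) = t • (X + γ • 1) + (X - Y) by module]
  · refine (hA.smul (by linarith)).posSemidef_inv_sub_inv hB ?_
    rwa [show Y + γ • 1 - (1 - t) • (X + γ • 1) = t • (X + γ • 1) - (X - Y) by module]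
end

section
/- Let K = R^T R be the Cholesky factorization of an m×m real positive definite matrix K, λ > 0, and let p ⪰ 0 be an m×m real symmetric positive semidefinite matrix. Then X = (1/(2λ)) R^T ((I_m + 4λ R^{-T} p R^{-1})^{1/2} − I_m) R is symmetric positive semidefinite and satisfies X + λ X K^{-1} X = p. -/
/-!
Conjugation by `R` turns the claim into the case `R = 1`, with `p` replaced by
`P = R⁻ᵀ p R⁻¹ ⪰ 0`. There every eigenvalue of `Q ⪰ 0` is a nonnegative number whose square
is an eigenvalue of `1 + 4λP ⪰ 1`, so `Q ⪰ 1` and `x = (Q - 1)/(2λ) ⪰ 0`; and `x + λx² = P`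
is the completed square `(2λx + 1)² = 1 + 4λP`.
-/

open Matrix
open scoped MatrixOrder

lemma one_le_of_one_le_mul_self {A : Type*} [Ring A] [StarRing A] [PartialOrder A]
    [StarOrderedRing A] [TopologicalSpace A] [Algebra ℝ A]
    [ContinuousFunctionalCalculus ℝ A IsSelfAdjoint] [NonnegSpectrumClass ℝ A]
    {a : A} (ha : 0 ≤ a) (h : 1 ≤ a * a) : 1 ≤ a := by
  have hmul : cfc (fun x : ℝ => x * x) a = a * a := by
    rw [cfc_mul .., cfc_id' ℝ a]
  have hsq : ∀ x ∈ spectrum ℝ a, 1 ≤ x * x := (one_le_cfc_iff _ a).mp (hmul ▸ h)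
  rw [CFC.one_le_iff (R := ℝ) a]
  intro x hx
  nlinarith [hsq x hx, spectrum_nonneg_of_nonneg ha hx]

lemma add_smul_mul_self_eq_of_mul_self_eq {K A : Type*} [Field K] [CharZero K] [Ring A]
    [Algebra K A] {q P : A} {l : K} (hl : l ≠ 0) (hq : q * q = 1 + (4 * l) • P) :
    letI x := (1 / (2 * l)) • (q - 1)
    x + l • (x * x) = P := by
  simp only [smul_mul_smul, sub_mul, mul_sub, one_mul, mul_one, hq]
  match_scalars <;> field_simp <;> ring

namespace Matrix

variable {n α : Type*} [Fintype n] [DecidableEq n] [CommRing α] {R : Matrix n n α}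

lemma transpose_mul_mul_mul_inv_transpose_mul_self_mul (hR : IsUnit R.det)
    (A B : Matrix n n α) : Rᵀ * A * R * (Rᵀ * R)⁻¹ * (Rᵀ * B * R) = Rᵀ * (A * B) * R := by
  have hRT : IsUnit Rᵀ.det := by rwa [det_transpose]
  simp only [Matrix.mul_inv_rev, Matrix.mul_assoc, mul_nonsing_inv_cancel_left _ _ hR,
    nonsing_inv_mul_cancel_left _ _ hRT]

lemma transpose_mul_transpose_inv_mul_mul_inv_mul (hR : IsUnit R.det) (p : Matrix n n α) :
    Rᵀ * ((R⁻¹)ᵀ * p * R⁻¹) * R = p := by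
  have hRT : IsUnit Rᵀ.det := by rwa [det_transpose]
  rw [transpose_nonsing_inv, ← Matrix.mul_assoc, mul_nonsing_inv_cancel_left _ _ hRT,
    nonsing_inv_mul_cancel_right _ _ hR]

end Matrix

theorem picard_update_solves_quadratic_general {m : ℕ}
    (R p Q : Matrix (Fin m) (Fin m) ℝ) (hR : IsUnit R.det)
    (l : ℝ) (hl : 0 < l)
    (hp : p.PosSemidef) (hQ : Q.PosSemidef)
    (hQsq : Q * Q = 1 + (4 * l) • ((R⁻¹)ᵀ * p * R⁻¹)) :
    letI X : Matrix (Fin m) (Fin m) ℝ := (1 / (2 * l)) • (Rᵀ * (Q - 1) * R)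
    X.PosSemidef ∧ X + l • (X * (Rᵀ * R)⁻¹ * X) = p := by
  set x := (1 / (2 * l)) • (Q - 1)
  have hX : (1 / (2 * l)) • (Rᵀ * (Q - 1) * R) = Rᵀ * x * R := by
    rw [Matrix.mul_smul, Matrix.smul_mul]
  have hP : ((R⁻¹)ᵀ * p * R⁻¹).PosSemidef := by
    simpa using hp.conjTranspose_mul_mul_same R⁻¹
  have hQ1 : 1 ≤ Q := by
    refine one_le_of_one_le_mul_self hQ.nonneg ?_
    rw [Matrix.le_iff, hQsq, add_sub_cancel_left]
    exact hP.smul (by positivity)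
  have hx : x.PosSemidef := (Matrix.le_iff.mp hQ1).smul (by positivity)
  refine ⟨?_, ?_⟩
  · rw [hX, ← conjTranspose_eq_transpose_of_trivial]
    exact hx.conjTranspose_mul_mul_same R
  · have hcongr : Rᵀ * x * R + l • (Rᵀ * (x * x) * R) = Rᵀ * (x + l • (x * x)) * R := by
      simp only [Matrix.mul_add, Matrix.add_mul, Matrix.mul_smul, Matrix.smul_mul]
    rw [hX, transpose_mul_mul_mul_inv_transpose_mul_self_mul hR, hcongr,
      add_smul_mul_self_eq_of_mul_self_eq hl.ne' hQsq,
      transpose_mul_transpose_inv_mul_mul_inv_mul hR]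

/-- Regularized Picard update solves the quadratic equation: with `K = Rᵀ R ≻ 0`,
`λ > 0`, `p ⪰ 0`, and `Q` the positive semidefinite square root of
`I + 4λ R⁻ᵀ p R⁻¹`, the matrix `X = (1/(2λ)) Rᵀ (Q − I) R` is positive
semidefinite and satisfies `X + λ X K⁻¹ X = p`. -/
theorem picard_update_solves_quadratic {m : ℕ}
    (R p Q : Matrix (Fin m) (Fin m) ℝ) (hR : IsUnit R.det)
    (hK : (Rᵀ * R).PosDef) (l : ℝ) (hl : 0 < l)
    (hp : p.PosSemidef) (hQ : Q.PosSemidef)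
    (hQsq : Q * Q = 1 + (4 * l) • ((R⁻¹)ᵀ * p * R⁻¹)) :
    letI X : Matrix (Fin m) (Fin m) ℝ := (1 / (2 * l)) • (Rᵀ * (Q - 1) * R)
    X.PosSemidef ∧ X + l • (X * (Rᵀ * R)⁻¹ * X) = p :=
  picard_update_solves_quadratic_general R p Q hR l hl hp hQ hQsq
end
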